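/- Let Φ, Ψ be Young functions, φ ∈ 𝒢^dec, and ρ : (0,∞)→(0,∞). Assume lim_{r→∞} φ(r) = 0 or that Ψ⁻¹(t)/Φ⁻¹(t) is almost decreasing. If there is A > 0 with (sup_{0<t≤r} ρ(t)) · Φ⁻¹(φ(r)) ≤ A Ψ⁻¹(φ(r)) for all r > 0, then for every C₀ > 0 there exists C₁ > 0 such that for all f ∈ L^{(Φ,φ)}(ℝⁿ) with f ≢ 0 and all x ∈ ℝⁿ: Ψ(M_ρ f(x)/(C₁‖f‖_{L^{(Φ,φ)}})) ≤ Φ(Mf(x)/(C₀‖f‖_{L^{(Φ,φ)}})), where M_ρ f(x) = sup_{B(a,r)∋x} ρ(r)·(1/|B(a,r)|)∫_{B(a,r)}|f| and M is the Hardy–Littlewood maximal operator. -/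

import Mathlib

open MeasureTheory Set Metric Filter NNReal ENNReal Topology

noncomputable section

/-- Generalized inverse in the sense of O'Neil. -/
def ginv (Φ : ℝ≥0∞ → ℝ≥0∞) (u : ℝ≥0∞) : ℝ≥0∞ :=
  if u = ⊤ then ⊤ else sInf {t | u < Φ t}

/-- A Young function: increasing, convex, vanishing at 0, left continuous,
not identically zero nor identically infinite. -/
structure IsYoung (Φ : ℝ≥0∞ → ℝ≥0∞) : Prop where
  mono : Monotone Φ
  zero : Φ 0 = 0
  top : Φ ⊤ = ⊤
  conv : ∀ (x y : ℝ≥0∞) (a b : ℝ≥0), a + b = 1 →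
    Φ ((a : ℝ≥0∞) * x + (b : ℝ≥0∞) * y) ≤ (a : ℝ≥0∞) * Φ x + (b : ℝ≥0∞) * Φ y
  lcont : ∀ t : ℝ≥0∞, t < sInf {s | Φ s = ⊤} →
    Filter.Tendsto Φ (nhdsWithin t (Set.Iio t)) (nhds (Φ t))
  pos : ∃ t, 0 < t ∧ Φ t ≠ ⊤
  fin : ∃ t, t ≠ ⊤ ∧ Φ t ≠ 0

/-- `θ` is almost decreasing on `(0,∞)`. -/
def AlmostDecreasingOn (θ : ℝ → ℝ) : Prop :=
  ∃ C : ℝ, 0 < C ∧ ∀ r s : ℝ, 0 < r → r < s → θ s ≤ C * θ r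

/-- `θ` is almost increasing on `(0,∞)`. -/
def AlmostIncreasingOn (θ : ℝ → ℝ) : Prop :=
  ∃ C : ℝ, 0 < C ∧ ∀ r s : ℝ, 0 < r → r < s → θ r ≤ C * θ s

/-- The class `𝒢^dec`: positive, almost decreasing `φ` with `r ↦ φ(r) rⁿ` almost increasing. -/
def Gdec (n : ℕ) (φ : ℝ → ℝ) : Prop :=
  (∀ r : ℝ, 0 < r → 0 < φ r) ∧ AlmostDecreasingOn φ ∧
    AlmostIncreasingOn (fun r => φ r * r ^ n)

variable {n : ℕ}

/-- The Orlicz–Morrey "norm" of `f` on the ball `B(a,r)`. -/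
def ballNorm (Φ : ℝ≥0∞ → ℝ≥0∞) (φ : ℝ → ℝ)
    (f : EuclideanSpace ℝ (Fin n) → ℝ) (a : EuclideanSpace ℝ (Fin n)) (r : ℝ) : ℝ≥0∞ :=
  sInf {lam : ℝ≥0∞ | 0 < lam ∧
    (ENNReal.ofReal (φ r))⁻¹ * ((volume (ball a r))⁻¹ *
      ∫⁻ x in ball a r, Φ (ENNReal.ofReal |f x| / lam)) ≤ 1}

/-- The Orlicz–Morrey norm `‖f‖_{L^{(Φ,φ)}}`: supremum over all balls of `ballNorm`. -/
def omNorm (Φ : ℝ≥0∞ → ℝ≥0∞) (φ : ℝ → ℝ) (f : EuclideanSpace ℝ (Fin n) → ℝ) : ℝ≥0∞ :=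
  ⨆ (a : EuclideanSpace ℝ (Fin n)) (r : ℝ) (_ : 0 < r), ballNorm Φ φ f a r

/-- The Orlicz–Campanato norm `‖f‖_{𝓛^{(Φ,φ)}} = sup_B ‖f − f_B‖_{Φ,φ,B}`. -/
def campNorm (Φ : ℝ≥0∞ → ℝ≥0∞) (φ : ℝ → ℝ) (f : EuclideanSpace ℝ (Fin n) → ℝ) : ℝ≥0∞ :=
  ⨆ (a : EuclideanSpace ℝ (Fin n)) (r : ℝ) (_ : 0 < r),
    ballNorm Φ φ (fun x => f x - ⨍ y in ball a r, f y) a r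

/-- The generalized fractional maximal operator
`M_ρ f(x) = sup_{B(a,r) ∋ x} ρ(r) ⨍_{B(a,r)} |f|`. -/
def Mrho {n : ℕ} (ρ : ℝ → ℝ) (f : EuclideanSpace ℝ (Fin n) → ℝ)
    (x : EuclideanSpace ℝ (Fin n)) : ℝ≥0∞ :=
  ⨆ (a : EuclideanSpace ℝ (Fin n)) (r : ℝ) (_ : 0 < r) (_ : x ∈ ball a r),
    ENNReal.ofReal (ρ r) *
      ((volume (ball a r))⁻¹ * ∫⁻ y in ball a r, ENNReal.ofReal |f y|)

/-!
Write `N = ‖f‖_{L^{(Φ,φ)}}`, `ρ̄(r) = sup_{0<t≤r} ρ(t)` and `u = Mf(x)/(C₀N)`; it suffices to bound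
`ρ(r) ⨍_{B(a,r)} |f|` by a multiple of `N Ψ⁻¹(Φ(u))` for every ball `B(a,r) ∋ x`.
A weak Jensen inequality bounds the average by `4 N Φ⁻¹(φ(r))`.
If `φ(r) ≤ Φ(u)` the hypothesis `ρ̄(r) Φ⁻¹(φ(r)) ≤ A Ψ⁻¹(φ(r))` concludes. If `Φ(u) < φ(r)`, the
average is at most `Mf(x) = C₀ N u`, and by right continuity of `Ψ⁻¹` it is enough to extend the
hypothesis to `ρ̄(r) Φ⁻¹(w) ≤ K Ψ⁻¹(w)` for all `0 < w < φ(r)`. Under the ratio condition this is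
immediate. When `φ → 0`, the doubling `φ(s) ≤ D φ(2s)` coming from `φ(r) rⁿ` almost increasing
yields `s ≥ r` with `φ(s) < w ≤ D φ(s)`, and `Φ⁻¹(D v) ≤ D Φ⁻¹(v)` by convexity.
-/

lemma le_mul_sInf_of_forall {S : Set ℝ≥0∞} {x k : ℝ≥0∞} (hk0 : k ≠ 0) (hk : k ≠ ⊤)
    (h : ∀ t ∈ S, x ≤ k * t) : x ≤ k * sInf S := by
  rw [← ENNReal.div_le_iff' hk0 hk]
  exact le_sInf fun t ht => (ENNReal.div_le_iff' hk0 hk).2 (h t ht)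

lemma one_le_natCast_of_lt_mul {m : ℕ} {a b : ℝ≥0∞} (h : a < m * b) : (1 : ℝ≥0∞) ≤ m := by
  rcases m with _ | m
  · simp at h
  · exact_mod_cast Nat.succ_pos m

section ginv

variable {Φ Ψ : ℝ≥0∞ → ℝ≥0∞} {u v t : ℝ≥0∞}

lemma ginv_top (Φ : ℝ≥0∞ → ℝ≥0∞) : ginv Φ ⊤ = ⊤ := if_pos rfl

lemma ginv_of_ne_top (hv : v ≠ ⊤) : ginv Φ v = sInf {t | v < Φ t} := if_neg hv

lemma ginv_le (hv : v ≠ ⊤) (h : v < Φ t) : ginv Φ v ≤ t := by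
  rw [ginv_of_ne_top hv]
  exact sInf_le h

lemma ginv_mono (Φ : ℝ≥0∞ → ℝ≥0∞) : Monotone (ginv Φ) := by
  intro u v huv
  rcases eq_or_ne v ⊤ with rfl | hv
  · exact (ginv_top Φ).symm ▸ le_top
  · rw [ginv_of_ne_top hv, ginv_of_ne_top (ne_top_of_le_ne_top hv huv)]
    exact sInf_le_sInf fun t ht => huv.trans_lt ht

lemma le_ginv (hΦ : Monotone Φ) (h : Φ u ≤ v) : u ≤ ginv Φ v := by
  rcases eq_or_ne v ⊤ with rfl | hv
  · exact (ginv_top Φ).symm ▸ le_top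
  · rw [ginv_of_ne_top hv]
    exact le_sInf fun t ht => le_of_not_gt fun htu => ((hΦ htu.le).trans h).not_gt ht

lemma apply_le_of_lt_ginv (hv : v ≠ ⊤) (h : u < ginv Φ v) : Φ u ≤ v :=
  le_of_not_gt fun hu => (ginv_le hv hu).not_gt h

/-- Right continuity of `ginv Φ`. -/
lemma le_mul_ginv_of_forall_lt {b x k : ℝ≥0∞} (hk0 : k ≠ 0) (hk : k ≠ ⊤) (hvb : v < b)
    (h : ∀ w, v < w → w < b → x ≤ k * ginv Φ w) : x ≤ k * ginv Φ v := by
  rw [ginv_of_ne_top hvb.ne_top]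
  refine le_mul_sInf_of_forall hk0 hk fun t ht => ?_
  obtain ⟨w, hvw, hw⟩ := exists_between (lt_min ht hvb)
  have hwb : w < b := hw.trans_le (min_le_right _ _)
  calc x ≤ k * ginv Φ w := h w hvw hwb
    _ ≤ k * t := by gcongr; exact ginv_le hwb.ne_top (hw.trans_le (min_le_left _ _))

lemma mul_le_mul_ginv_apply (hΦ : Monotone Φ) {x k p : ℝ≥0∞} (hk0 : k ≠ 0) (hk : k ≠ ⊤)
    (h : ∀ w, 0 < w → w < p → x * ginv Φ w ≤ k * ginv Ψ w) (hu : Φ u < p) :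
    x * u ≤ k * ginv Ψ (Φ u) :=
  le_mul_ginv_of_forall_lt hk0 hk hu fun w huw hwp =>
    (mul_le_mul_right (le_ginv hΦ huw.le) x).trans (h w (zero_le.trans_lt huw) hwp)

end ginv

namespace IsYoung

variable {Φ : ℝ≥0∞ → ℝ≥0∞} {u v : ℝ≥0∞}

lemma mul_apply_le_apply_mul (hΦ : IsYoung Φ) {d : ℝ≥0∞} (hd : 1 ≤ d) (hd' : d ≠ ⊤)
    (t : ℝ≥0∞) : d * Φ t ≤ Φ (d * t) := by
  lift d to ℝ≥0 using hd'
  have hd0 : (d : ℝ≥0∞) ≠ 0 := (zero_lt_one.trans_le hd).ne'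
  have hinv : d⁻¹ + (1 - d⁻¹) = 1 :=
    add_tsub_cancel_of_le (inv_le_one_of_one_le₀ (by exact_mod_cast hd))
  have h := hΦ.conv (d * t) 0 d⁻¹ (1 - d⁻¹) hinv
  rw [mul_zero, add_zero, hΦ.zero, mul_zero, add_zero, ← mul_assoc,
    ENNReal.coe_inv (by exact_mod_cast hd0), ENNReal.inv_mul_cancel hd0 ENNReal.coe_ne_top,
    one_mul] at h
  calc (d : ℝ≥0∞) * Φ t ≤ d * ((d : ℝ≥0∞)⁻¹ * Φ (d * t)) := by gcongr
    _ = Φ (d * t) := by rw [← mul_assoc, ENNReal.mul_inv_cancel hd0 ENNReal.coe_ne_top, one_mul]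

lemma mul_apply_le_mul_apply (hΦ : IsYoung Φ) {c t : ℝ≥0∞} (hc0 : c ≠ 0) (hc : c ≠ ⊤)
    (hct : c ≤ t) : t * Φ c ≤ c * Φ t := by
  rcases eq_or_ne t ⊤ with rfl | ht
  · rw [hΦ.top, ENNReal.mul_top hc0]
    exact le_top
  have h1 : 1 ≤ t / c := (ENNReal.le_div_iff_mul_le (Or.inl hc0) (Or.inl hc)).2 (by simpa)
  calc t * Φ c = c * (t / c * Φ c) := by rw [← mul_assoc, ENNReal.mul_div_cancel hc0 hc]
    _ ≤ c * Φ (t / c * c) := by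
        gcongr; exact hΦ.mul_apply_le_apply_mul h1 (ENNReal.div_ne_top ht hc0) c
    _ = c * Φ t := by rw [ENNReal.div_mul_cancel hc0 hc]

lemma mul_le_add (hΦ : IsYoung Φ) {p c t : ℝ≥0∞} (hc0 : c ≠ 0) (hc : c ≠ ⊤) (hp : p ≤ Φ c) :
    p * t ≤ p * c + c * Φ t := by
  rcases le_total t c with htc | hct
  · exact (mul_le_mul_right htc p).trans le_self_add
  · calc p * t ≤ t * Φ c := by rw [mul_comm]; gcongr
      _ ≤ c * Φ t := hΦ.mul_apply_le_mul_apply hc0 hc hct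
      _ ≤ p * c + c * Φ t := le_add_self

lemma ginv_lt_top (hΦ : IsYoung Φ) (hv : v ≠ ⊤) : ginv Φ v < ⊤ := by
  obtain ⟨t, ht, hΦt⟩ := hΦ.fin
  obtain ⟨m, hm⟩ := ENNReal.exists_nat_mul_gt hΦt hv
  have hmt := hΦ.mul_apply_le_apply_mul (one_le_natCast_of_lt_mul hm) (ENNReal.natCast_ne_top m) t
  exact (ginv_le hv (hm.trans_le hmt)).trans_lt
    (ENNReal.mul_lt_top (ENNReal.natCast_lt_top m) ht.lt_top)

lemma ginv_pos (hΦ : IsYoung Φ) (hv : v ≠ 0) : 0 < ginv Φ v := by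
  obtain ⟨t, ht0, hΦt⟩ := hΦ.pos
  obtain ⟨m, hm⟩ := ENNReal.exists_nat_mul_gt hv hΦt
  have hm1 := one_le_natCast_of_lt_mul hm
  have hm0 : (m : ℝ≥0∞) ≠ 0 := (zero_lt_one.trans_le hm1).ne'
  have hmt : (m : ℝ≥0∞) ≠ ⊤ := ENNReal.natCast_ne_top m
  have hΦtm : Φ (t / m) ≤ v := by
    have h := hΦ.mul_apply_le_apply_mul hm1 hmt (t / m)
    rw [ENNReal.mul_div_cancel hm0 hmt] at h
    exact (ENNReal.mul_le_mul_iff_right hm0 hmt).1 (h.trans hm.le)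
  exact (ENNReal.div_pos ht0.ne' hmt).trans_le (le_ginv hΦ.mono hΦtm)

lemma ginv_mul_le (hΦ : IsYoung Φ) {d : ℝ≥0∞} (hd : 1 ≤ d) (hd' : d ≠ ⊤) (v : ℝ≥0∞) :
    ginv Φ (d * v) ≤ d * ginv Φ v := by
  have hd0 : d ≠ 0 := (zero_lt_one.trans_le hd).ne'
  rcases eq_or_ne v ⊤ with rfl | hv
  · rw [ENNReal.mul_top hd0, ginv_top, ENNReal.mul_top hd0]
  rw [ginv_of_ne_top hv]
  refine le_mul_sInf_of_forall hd0 hd' fun t ht => ginv_le (ENNReal.mul_ne_top hd' hv) ?_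
  exact ((ENNReal.mul_lt_mul_iff_right hd0 hd').2 ht).trans_le
    (hΦ.mul_apply_le_apply_mul hd hd' t)

lemma apply_le_of_le_half_ginv (hΦ : IsYoung Φ) (hv : v ≠ ⊤) (hu : u ≤ ginv Φ v / 2) :
    Φ u ≤ v := by
  rcases eq_or_ne (ginv Φ v) 0 with h0 | h0
  · rw [h0, ENNReal.zero_div, nonpos_iff_eq_zero] at hu
    rw [hu, hΦ.zero]
    exact zero_le
  · exact apply_le_of_lt_ginv hv (hu.trans_lt (ENNReal.half_lt_self h0 (hΦ.ginv_lt_top hv).ne))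

/-- A Jensen-type inequality that needs no measurability of `g`. -/
lemma lintegral_le_mul_ginv {α : Type*} [MeasurableSpace α] (hΦ : IsYoung Φ) (μ : Measure α)
    (g : α → ℝ≥0∞) {p : ℝ≥0∞} (hp0 : p ≠ 0) (hp : p ≠ ⊤)
    (h : ∫⁻ x, Φ (g x) ∂μ ≤ p * μ univ) : ∫⁻ x, g x ∂μ ≤ 4 * ginv Φ p * μ univ := by
  have hw0 := (hΦ.ginv_pos hp0).ne'
  have hw := (hΦ.ginv_lt_top hp).ne
  set c := 2 * ginv Φ p with hc_def
  have hc0 : c ≠ 0 := mul_ne_zero two_ne_zero hw0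
  have hc : c ≠ ⊤ := ENNReal.mul_ne_top ENNReal.ofNat_ne_top hw
  have hwc : ginv Φ p < c := by
    rw [hc_def, two_mul]
    exact ENNReal.lt_add_right hw hw0
  have hpc : p ≤ Φ c := le_of_not_gt fun hcp => hwc.not_ge (le_ginv hΦ.mono hcp.le)
  have hkey : p * ∫⁻ x, g x ∂μ ≤ p * (2 * c * μ univ) :=
    calc p * ∫⁻ x, g x ∂μ = ∫⁻ x, p * g x ∂μ := (lintegral_const_mul' p g hp).symm
      _ ≤ ∫⁻ x, (p * c + c * Φ (g x)) ∂μ := lintegral_mono fun x => hΦ.mul_le_add hc0 hc hpc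
      _ = p * c * μ univ + c * ∫⁻ x, Φ (g x) ∂μ := by
          rw [lintegral_add_left measurable_const, lintegral_const, lintegral_const_mul' c _ hc]
      _ ≤ p * c * μ univ + c * (p * μ univ) := by gcongr
      _ = p * (2 * c * μ univ) := by ring
  calc ∫⁻ x, g x ∂μ ≤ 2 * c * μ univ := (ENNReal.mul_le_mul_iff_right hp0 hp).1 hkey
    _ = 4 * ginv Φ p * μ univ := by rw [hc_def]; ring

end IsYoung

def supIoc (ρ : ℝ → ℝ) (r : ℝ) : ℝ≥0∞ := ⨆ t ∈ Ioc (0 : ℝ) r, ENNReal.ofReal (ρ t)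

lemma ofReal_le_supIoc (ρ : ℝ → ℝ) {r : ℝ} (hr : 0 < r) : ENNReal.ofReal (ρ r) ≤ supIoc ρ r :=
  le_biSup (fun t => ENNReal.ofReal (ρ t)) ⟨hr, le_rfl⟩

lemma supIoc_mono (ρ : ℝ → ℝ) : Monotone (supIoc ρ) :=
  fun _ _ hrs => biSup_mono fun _ ht => ⟨ht.1, ht.2.trans hrs⟩

lemma Gdec.exists_doubling {φ : ℝ → ℝ} (hφ : Gdec n φ) :
    ∃ D : ℝ, 1 ≤ D ∧ ∀ s, 0 < s → φ s ≤ D * φ (2 * s) := by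
  obtain ⟨hpos, -, C, -, hinc⟩ := hφ
  refine ⟨max (C * 2 ^ n) 1, le_max_right _ _, fun s hs => ?_⟩
  have h := hinc s (2 * s) hs (by linarith)
  have hC : φ s ≤ C * 2 ^ n * φ (2 * s) :=
    le_of_mul_le_mul_right (h.trans_eq (by ring)) (pow_pos hs n)
  exact hC.trans (mul_le_mul_of_nonneg_right (le_max_left _ _) (hpos _ (by linarith)).le)

lemma exists_lt_le_mul_of_tendsto_zero {φ : ℝ → ℝ} {D : ℝ}
    (hdouble : ∀ s, 0 < s → φ s ≤ D * φ (2 * s)) (hlim : Tendsto φ atTop (𝓝 0))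
    {r w : ℝ} (hr : 0 < r) (hw : 0 < w) (hwr : w < φ r) :
    ∃ s, r ≤ s ∧ φ s < w ∧ w ≤ D * φ s := by
  have hex : ∃ k : ℕ, φ (2 ^ k * r) < w :=
    ((hlim.comp ((tendsto_pow_atTop_atTop_of_one_lt (one_lt_two : (1 : ℝ) < 2)).atTop_mul_const hr)).eventually
      (gt_mem_nhds hw)).exists
  classical
  obtain ⟨j, hj⟩ : ∃ j, Nat.find hex = j + 1 := by
    refine Nat.exists_eq_succ_of_ne_zero fun h => ?_
    have := Nat.find_spec hex
    rw [h, pow_zero, one_mul] at this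
    exact this.not_gt hwr
  have hwj : w ≤ φ (2 ^ j * r) := le_of_not_gt (Nat.find_min hex (by omega))
  refine ⟨2 ^ Nat.find hex * r, le_mul_of_one_le_left hr.le (one_le_pow₀ one_le_two),
    Nat.find_spec hex, hwj.trans ?_⟩
  rw [hj, pow_succ, mul_comm _ 2, mul_assoc]
  exact hdouble _ (by positivity)

section extension

variable {Φ Ψ : ℝ≥0∞ → ℝ≥0∞} {φ ρ : ℝ → ℝ} {A : ℝ}

lemma supIoc_mul_ginv_le_of_tendsto_zero (hΦ : IsYoung Φ) {D : ℝ} (hD : 1 ≤ D)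
    (hdouble : ∀ s, 0 < s → φ s ≤ D * φ (2 * s)) (hlim : Tendsto φ atTop (𝓝 0))
    (hAineq : ∀ r : ℝ, 0 < r → supIoc ρ r * ginv Φ (ENNReal.ofReal (φ r)) ≤
      ENNReal.ofReal A * ginv Ψ (ENNReal.ofReal (φ r)))
    {r : ℝ} (hr : 0 < r) {w : ℝ≥0∞} (hw : 0 < w) (hwr : w < ENNReal.ofReal (φ r)) :
    supIoc ρ r * ginv Φ w ≤ ENNReal.ofReal (D * A) * ginv Ψ w := by
  have hwt : w ≠ ⊤ := hwr.ne_top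
  obtain ⟨s, hrs, hsw, hws⟩ := exists_lt_le_mul_of_tendsto_zero hdouble hlim hr
    (ENNReal.toReal_pos hw.ne' hwt) (ENNReal.toReal_lt_of_lt_ofReal hwr)
  have hD0 : 0 ≤ D := zero_le_one.trans hD
  have hwDs : w ≤ ENNReal.ofReal D * ENNReal.ofReal (φ s) := by
    rw [← ENNReal.ofReal_mul hD0, ENNReal.le_ofReal_iff_toReal_le hwt (ENNReal.toReal_nonneg.trans hws)]
    exact hws
  calc supIoc ρ r * ginv Φ w
      ≤ supIoc ρ s * (ENNReal.ofReal D * ginv Φ (ENNReal.ofReal (φ s))) := by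
        gcongr
        · exact supIoc_mono ρ hrs
        · exact (ginv_mono Φ hwDs).trans
            (hΦ.ginv_mul_le (ENNReal.one_le_ofReal.2 hD) ENNReal.ofReal_ne_top _)
    _ = ENNReal.ofReal D * (supIoc ρ s * ginv Φ (ENNReal.ofReal (φ s))) := by ring
    _ ≤ ENNReal.ofReal D * (ENNReal.ofReal A * ginv Ψ (ENNReal.ofReal (φ s))) :=
        mul_le_mul_right (hAineq s (hr.trans_le hrs)) _
    _ ≤ ENNReal.ofReal D * (ENNReal.ofReal A * ginv Ψ w) := by
        gcongr; exact ginv_mono Ψ (ENNReal.ofReal_le_of_le_toReal hsw.le)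
    _ = ENNReal.ofReal (D * A) * ginv Ψ w := by rw [ENNReal.ofReal_mul hD0]; ring

lemma supIoc_mul_ginv_le_of_ratio (hΦ : IsYoung Φ) {C : ℝ} (hC : 0 < C)
    (hratio : ∀ u v : ℝ≥0∞, 0 < u → u < v → v ≠ ⊤ →
      ginv Ψ v / ginv Φ v ≤ ENNReal.ofReal C * (ginv Ψ u / ginv Φ u))
    (hAineq : ∀ r : ℝ, 0 < r → supIoc ρ r * ginv Φ (ENNReal.ofReal (φ r)) ≤
      ENNReal.ofReal A * ginv Ψ (ENNReal.ofReal (φ r)))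
    {r : ℝ} (hr : 0 < r) {w : ℝ≥0∞} (hw : 0 < w) (hwr : w < ENNReal.ofReal (φ r)) :
    supIoc ρ r * ginv Φ w ≤ ENNReal.ofReal (C * A) * ginv Ψ w := by
  set p := ENNReal.ofReal (φ r)
  have hb0 := (hΦ.ginv_pos (hw.trans hwr).ne').ne'
  have hb := (hΦ.ginv_lt_top (v := p) ENNReal.ofReal_ne_top).ne
  have ha0 := (hΦ.ginv_pos hw.ne').ne'
  have ha := (hΦ.ginv_lt_top hwr.ne_top).ne
  have hsup : supIoc ρ r ≤ ENNReal.ofReal A * (ginv Ψ p / ginv Φ p) := by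
    rw [← mul_div_assoc, ENNReal.le_div_iff_mul_le (Or.inl hb0) (Or.inl hb)]
    exact hAineq r hr
  calc supIoc ρ r * ginv Φ w
      ≤ ENNReal.ofReal A * (ENNReal.ofReal C * (ginv Ψ w / ginv Φ w)) * ginv Φ w := by
        gcongr
        exact hsup.trans (by gcongr; exact hratio w p hw hwr ENNReal.ofReal_ne_top)
    _ = ENNReal.ofReal C * ENNReal.ofReal A * (ginv Ψ w / ginv Φ w * ginv Φ w) := by ring
    _ = ENNReal.ofReal (C * A) * ginv Ψ w := by
        rw [ENNReal.div_mul_cancel ha0 ha, ENNReal.ofReal_mul hC.le]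

end extension

def ballAvg (f : EuclideanSpace ℝ (Fin n) → ℝ) (a : EuclideanSpace ℝ (Fin n)) (r : ℝ) : ℝ≥0∞ :=
  (volume (ball a r))⁻¹ * ∫⁻ y in ball a r, ENNReal.ofReal |f y|

section maximal

variable {Φ Ψ : ℝ≥0∞ → ℝ≥0∞} {φ ρ : ℝ → ℝ} (f : EuclideanSpace ℝ (Fin n) → ℝ)

lemma ballNorm_le_omNorm (a : EuclideanSpace ℝ (Fin n)) {r : ℝ} (hr : 0 < r) :
    ballNorm Φ φ f a r ≤ omNorm Φ φ f :=
  le_iSup_of_le a (le_iSup₂_of_le r hr le_rfl)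

lemma ballAvg_le_Mrho_one {x a : EuclideanSpace ℝ (Fin n)} {r : ℝ} (hr : 0 < r)
    (hx : x ∈ ball a r) : ballAvg f a r ≤ Mrho (fun _ => 1) f x :=
  le_iSup_of_le a (le_iSup_of_le r (le_iSup_of_le hr (le_iSup_of_le hx (by simp [ballAvg]))))

lemma ballAvg_le_ginv_mul_omNorm (hΦ : IsYoung Φ) (a : EuclideanSpace ℝ (Fin n)) {r : ℝ}
    (hr : 0 < r) (hφr : 0 < φ r) :
    ballAvg f a r ≤ 4 * ginv Φ (ENNReal.ofReal (φ r)) * omNorm Φ φ f := by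
  set p := ENNReal.ofReal (φ r)
  have hp0 : p ≠ 0 := (ENNReal.ofReal_pos.2 hφr).ne'
  have hp : p ≠ ⊤ := ENNReal.ofReal_ne_top
  have hk0 : 4 * ginv Φ p ≠ 0 := mul_ne_zero (by norm_num) (hΦ.ginv_pos hp0).ne'
  have hk : 4 * ginv Φ p ≠ ⊤ := ENNReal.mul_ne_top (by norm_num) (hΦ.ginv_lt_top hp).ne
  have hV0 : volume (ball a r) ≠ 0 := (measure_ball_pos volume a hr).ne'
  have hV : volume (ball a r) ≠ ⊤ := measure_ball_lt_top.ne
  refine le_trans ?_ (mul_le_mul_right (ballNorm_le_omNorm f a hr) _)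
  refine le_mul_sInf_of_forall hk0 hk fun lam ⟨hlam0, hlam⟩ => ?_
  rcases eq_or_ne lam ⊤ with rfl | hlamt
  · rw [ENNReal.mul_top hk0]
    exact le_top
  rw [ENNReal.inv_mul_le_iff hp0 hp, mul_one, ENNReal.inv_mul_le_iff hV0 hV, mul_comm] at hlam
  have hJ := hΦ.lintegral_le_mul_ginv (volume.restrict (ball a r)) _ hp0 hp
    (by rwa [Measure.restrict_apply_univ])
  simp only [Measure.restrict_apply_univ, div_eq_mul_inv] at hJ
  rw [lintegral_mul_const' _ _ (ENNReal.inv_ne_top.2 hlam0.ne'),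
    ENNReal.mul_inv_le_iff hlam0.ne' hlamt] at hJ
  rw [ballAvg, ENNReal.inv_mul_le_iff hV0 hV]
  exact hJ.trans_eq (by ring)

lemma ofReal_mul_ballAvg_le (hΦ : IsYoung Φ) {A K C₀ : ℝ} (hK : 0 < K)
    (hAineq : ∀ r : ℝ, 0 < r → supIoc ρ r * ginv Φ (ENNReal.ofReal (φ r)) ≤
      ENNReal.ofReal A * ginv Ψ (ENNReal.ofReal (φ r)))
    (hext : ∀ r : ℝ, 0 < r → ∀ w, 0 < w → w < ENNReal.ofReal (φ r) →
      supIoc ρ r * ginv Φ w ≤ ENNReal.ofReal K * ginv Ψ w)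
    (hN : ENNReal.ofReal C₀ * omNorm Φ φ f ≠ 0) (hNt : ENNReal.ofReal C₀ * omNorm Φ φ f ≠ ⊤)
    {x a : EuclideanSpace ℝ (Fin n)} {r : ℝ} (hr : 0 < r) (hφr : 0 < φ r) (hx : x ∈ ball a r) :
    ENNReal.ofReal (ρ r) * ballAvg f a r ≤
      (4 * ENNReal.ofReal A + ENNReal.ofReal C₀ * ENNReal.ofReal K) * omNorm Φ φ f *
        ginv Ψ (Φ (Mrho (fun _ => 1) f x / (ENNReal.ofReal C₀ * omNorm Φ φ f))) := by
  set N := omNorm Φ φ f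
  set u := Mrho (fun _ => 1) f x / (ENNReal.ofReal C₀ * N)
  have hρ := ofReal_le_supIoc ρ hr
  rcases le_or_gt (ENNReal.ofReal (φ r)) (Φ u) with hle | hlt
  · calc ENNReal.ofReal (ρ r) * ballAvg f a r
        ≤ supIoc ρ r * (4 * ginv Φ (ENNReal.ofReal (φ r)) * N) :=
          mul_le_mul' hρ (ballAvg_le_ginv_mul_omNorm f hΦ a hr hφr)
      _ = 4 * N * (supIoc ρ r * ginv Φ (ENNReal.ofReal (φ r))) := by ring
      _ ≤ 4 * N * (ENNReal.ofReal A * ginv Ψ (Φ u)) := by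
          refine mul_le_mul_right ((hAineq r hr).trans ?_) _
          gcongr
          exact ginv_mono Ψ hle
      _ = 4 * ENNReal.ofReal A * N * ginv Ψ (Φ u) := by ring
      _ ≤ _ := by gcongr; exact le_self_add
  · have hM : Mrho (fun _ => 1) f x = ENNReal.ofReal C₀ * N * u :=
      (ENNReal.mul_div_cancel hN hNt).symm
    calc ENNReal.ofReal (ρ r) * ballAvg f a r
        ≤ supIoc ρ r * (ENNReal.ofReal C₀ * N * u) :=
          mul_le_mul' hρ (hM ▸ ballAvg_le_Mrho_one f hr hx)
      _ = ENNReal.ofReal C₀ * N * (supIoc ρ r * u) := by ring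
      _ ≤ ENNReal.ofReal C₀ * N * (ENNReal.ofReal K * ginv Ψ (Φ u)) :=
          mul_le_mul_right (mul_le_mul_ginv_apply hΦ.mono (ENNReal.ofReal_pos.2 hK).ne'
            ENNReal.ofReal_ne_top (hext r hr) hlt) _
      _ = ENNReal.ofReal C₀ * ENNReal.ofReal K * N * ginv Ψ (Φ u) := by ring
      _ ≤ _ := by gcongr; exact le_add_self

lemma apply_Mrho_div_le (hΦ : IsYoung Φ) (hΨ : IsYoung Ψ) (hφpos : ∀ r : ℝ, 0 < r → 0 < φ r)
    {A K C₀ : ℝ} (hA : 0 ≤ A) (hK : 0 < K) (hC₀ : 0 < C₀)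
    (hAineq : ∀ r : ℝ, 0 < r → supIoc ρ r * ginv Φ (ENNReal.ofReal (φ r)) ≤
      ENNReal.ofReal A * ginv Ψ (ENNReal.ofReal (φ r)))
    (hext : ∀ r : ℝ, 0 < r → ∀ w, 0 < w → w < ENNReal.ofReal (φ r) →
      supIoc ρ r * ginv Φ w ≤ ENNReal.ofReal K * ginv Ψ w)
    (hN0 : omNorm Φ φ f ≠ 0) (hNt : omNorm Φ φ f ≠ ⊤) (x : EuclideanSpace ℝ (Fin n)) :
    Ψ (Mrho ρ f x / (ENNReal.ofReal (2 * (4 * A + C₀ * K)) * omNorm Φ φ f)) ≤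
      Φ (Mrho (fun _ => 1) f x / (ENNReal.ofReal C₀ * omNorm Φ φ f)) := by
  set N := omNorm Φ φ f
  set u := Mrho (fun _ => 1) f x / (ENNReal.ofReal C₀ * N)
  rcases eq_or_ne (Φ u) ⊤ with hu | hu
  · rw [hu]
    exact le_top
  have hC₀0 : ENNReal.ofReal C₀ ≠ 0 := (ENNReal.ofReal_pos.2 hC₀).ne'
  have hK0 : ENNReal.ofReal K ≠ 0 := (ENNReal.ofReal_pos.2 hK).ne'
  set D := (4 * ENNReal.ofReal A + ENNReal.ofReal C₀ * ENNReal.ofReal K) * N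
  have hD0 : D ≠ 0 := mul_ne_zero (by simp [hC₀0, hK0]) hN0
  have hD : D ≠ ⊤ := ENNReal.mul_ne_top (by finiteness) hNt
  have h2D : ENNReal.ofReal (2 * (4 * A + C₀ * K)) * N = 2 * D := by
    rw [ENNReal.ofReal_mul zero_le_two, ENNReal.ofReal_add (by positivity) (by positivity),
      ENNReal.ofReal_mul (by norm_num), ENNReal.ofReal_mul hC₀.le]
    simp only [ENNReal.ofReal_ofNat, D]
    ring
  have hM : Mrho ρ f x ≤ D * ginv Ψ (Φ u) :=
    iSup_le fun a => iSup_le fun r => iSup_le fun hr => iSup_le fun hx =>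
      ofReal_mul_ballAvg_le f hΦ hK hAineq hext (mul_ne_zero hC₀0 hN0)
        (ENNReal.mul_ne_top ENNReal.ofReal_ne_top hNt) hr (hφpos r hr) hx
  refine hΨ.apply_le_of_le_half_ginv hu ?_
  rw [h2D, ENNReal.div_le_iff (mul_ne_zero two_ne_zero hD0) (ENNReal.mul_ne_top (by norm_num) hD)]
  calc Mrho ρ f x ≤ D * ginv Ψ (Φ u) := hM
    _ = ginv Ψ (Φ u) / 2 * 2 * D := by rw [ENNReal.div_mul_cancel two_ne_zero (by norm_num)]; ring
    _ = ginv Ψ (Φ u) / 2 * (2 * D) := by ring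

end maximal

theorem stmt17_general {n : ℕ} (Φ Ψ : ℝ≥0∞ → ℝ≥0∞) (hΦ : IsYoung Φ) (hΨ : IsYoung Ψ)
    (φ : ℝ → ℝ) (hφ : Gdec n φ) (ρ : ℝ → ℝ)
    (halt : Filter.Tendsto φ Filter.atTop (nhds 0) ∨
      ∃ C : ℝ, 0 < C ∧ ∀ u v : ℝ≥0∞, 0 < u → u < v → v ≠ ⊤ →
        ginv Ψ v / ginv Φ v ≤ ENNReal.ofReal C * (ginv Ψ u / ginv Φ u))
    (A : ℝ) (hA : 0 < A)
    (hAineq : ∀ r : ℝ, 0 < r →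
      (⨆ t ∈ Set.Ioc (0 : ℝ) r, ENNReal.ofReal (ρ t)) * ginv Φ (ENNReal.ofReal (φ r)) ≤
        ENNReal.ofReal A * ginv Ψ (ENNReal.ofReal (φ r))) :
    ∀ C₀ : ℝ, 0 < C₀ → ∃ C₁ : ℝ, 0 < C₁ ∧
      ∀ f : EuclideanSpace ℝ (Fin n) → ℝ,
        omNorm Φ φ f ≠ 0 → omNorm Φ φ f ≠ ⊤ →
        ∀ x : EuclideanSpace ℝ (Fin n),
          Ψ (Mrho ρ f x / (ENNReal.ofReal C₁ * omNorm Φ φ f)) ≤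
            Φ (Mrho (fun _ => 1) f x / (ENNReal.ofReal C₀ * omNorm Φ φ f)) := by
  obtain ⟨K, hK, hext⟩ : ∃ K : ℝ, 0 < K ∧ ∀ r : ℝ, 0 < r → ∀ w, 0 < w →
      w < ENNReal.ofReal (φ r) → supIoc ρ r * ginv Φ w ≤ ENNReal.ofReal K * ginv Ψ w := by
    rcases halt with hlim | ⟨C, hC, hratio⟩
    · obtain ⟨D, hD, hdouble⟩ := hφ.exists_doubling
      exact ⟨D * A, mul_pos (zero_lt_one.trans_le hD) hA, fun r hr w hw hwr =>
        supIoc_mul_ginv_le_of_tendsto_zero hΦ hD hdouble hlim hAineq hr hw hwr⟩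
    · exact ⟨C * A, mul_pos hC hA, fun r hr w hw hwr =>
        supIoc_mul_ginv_le_of_ratio hΦ hC hratio hAineq hr hw hwr⟩
  intro C₀ hC₀
  exact ⟨2 * (4 * A + C₀ * K), by positivity, fun f hN0 hNt x =>
    apply_Mrho_div_le f hΦ hΨ hφ.1 hA.le hK hC₀ hAineq hext hN0 hNt x⟩

/-- pointwise domination of the generalized fractional maximal operator
by the Hardy–Littlewood maximal operator through the Young functions `Φ, Ψ`. -/
theorem stmt17 {n : ℕ} (Φ Ψ : ℝ≥0∞ → ℝ≥0∞) (hΦ : IsYoung Φ) (hΨ : IsYoung Ψ)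
    (φ : ℝ → ℝ) (hφ : Gdec n φ) (ρ : ℝ → ℝ) (hρ : ∀ r : ℝ, 0 < r → 0 < ρ r)
    (halt : Filter.Tendsto φ Filter.atTop (nhds 0) ∨
      ∃ C : ℝ, 0 < C ∧ ∀ u v : ℝ≥0∞, 0 < u → u < v → v ≠ ⊤ →
        ginv Ψ v / ginv Φ v ≤ ENNReal.ofReal C * (ginv Ψ u / ginv Φ u))
    (A : ℝ) (hA : 0 < A)
    (hAineq : ∀ r : ℝ, 0 < r →
      (⨆ t ∈ Set.Ioc (0 : ℝ) r, ENNReal.ofReal (ρ t)) * ginv Φ (ENNReal.ofReal (φ r)) ≤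
        ENNReal.ofReal A * ginv Ψ (ENNReal.ofReal (φ r))) :
    ∀ C₀ : ℝ, 0 < C₀ → ∃ C₁ : ℝ, 0 < C₁ ∧
      ∀ f : EuclideanSpace ℝ (Fin n) → ℝ,
        omNorm Φ φ f ≠ 0 → omNorm Φ φ f ≠ ⊤ →
        ∀ x : EuclideanSpace ℝ (Fin n),
          Ψ (Mrho ρ f x / (ENNReal.ofReal C₁ * omNorm Φ φ f)) ≤
            Φ (Mrho (fun _ => 1) f x / (ENNReal.ofReal C₀ * omNorm Φ φ f)) :=
  stmt17_general Φ Ψ hΦ hΨ φ hφ ρ halt A hA hAineq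

end
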